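/- arXiv:1405.3527 — 4 statements merged into one kernel-verified Lean document; each statement's English description precedes it below -/
import Mathlib

section
/- Let G = (V,E) be a finite simple graph and let c : V → {0,1,2} be a proper coloring of G (adjacent vertices receive different colors). Then the orientation of G that directs each edge {u,v} from u to v if and only if c(u) < c(v) is a semi-transitive orientation of G. -/
/-!
Colors strictly increase along every arc. Hence the orientation has no directed cycle, and a
directed path has at most three vertices, because its colors form a strictly increasing sequence
in `Fin 3`; so the path condition of semi-transitivity is never triggered.
-/

/-- A digraph (given as a relation `D`) is semi-transitive if it is acyclic and for
every directed path `v 0 → v 1 → ⋯ → v k` with at least 4 distinct vertices,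
if `v 0 → v k` is an edge then `v i → v j` is an edge for all `i < j`. -/
def SemiTransitive {V : Type*} (D : V → V → Prop) : Prop :=
  (∀ v : V, ¬ Relation.TransGen D v v) ∧
  ∀ k : ℕ, 3 ≤ k → ∀ v : Fin (k + 1) → V, Function.Injective v →
    (∀ i : Fin k, D (v i.castSucc) (v i.succ)) →
    D (v 0) (v (Fin.last k)) →
    ∀ i j : Fin (k + 1), i < j → D (v i) (v j)

/-- `D` is an orientation of the simple graph `G`: every edge of `G` gets exactly one
direction, and `D` only relates adjacent vertices. -/
def IsOrientation {V : Type*} (G : SimpleGraph V) (D : V → V → Prop) : Prop :=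
  ∀ x y : V, (G.Adj x y ↔ (D x y ∨ D y x)) ∧ ¬ (D x y ∧ D y x)

theorem isOrientation_of_adj_imp_ne {V α : Type*} [LinearOrder α] (G : SimpleGraph V)
    (c : V → α) (hc : ∀ u v : V, G.Adj u v → c u ≠ c v) :
    IsOrientation G (fun u v => G.Adj u v ∧ c u < c v) := by
  refine fun x y => ⟨⟨fun h => ?_, ?_⟩, fun ⟨⟨_, hxy⟩, ⟨_, hyx⟩⟩ => hxy.asymm hyx⟩
  · rcases (hc x y h).lt_or_gt with hxy | hyx
    · exact Or.inl ⟨h, hxy⟩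
    · exact Or.inr ⟨h.symm, hyx⟩
  · rintro (⟨h, _⟩ | ⟨h, _⟩)
    exacts [h, h.symm]

section MonotoneArcs

variable {V : Type*} {D : V → V → Prop}

theorem Relation.TransGen.lt_of_forall_lt {α : Type*} [Preorder α] {c : V → α}
    (hD : ∀ u v, D u v → c u < c v) {x y : V} (h : Relation.TransGen D x y) : c x < c y := by
  have h' := h.lift c hD
  rwa [Relation.transGen_eq_self] at h'

theorem not_transGen_self_of_forall_lt {α : Type*} [Preorder α] {c : V → α}
    (hD : ∀ u v, D u v → c u < c v) (x : V) : ¬ Relation.TransGen D x x :=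
  fun h => (h.lt_of_forall_lt hD).false

theorem lt_of_path_of_forall_lt {n k : ℕ} {c : V → Fin n} (hD : ∀ u v, D u v → c u < c v)
    (v : Fin (k + 1) → V) (hv : ∀ i : Fin k, D (v i.castSucc) (v i.succ)) : k < n := by
  have hmono : StrictMono (c ∘ v) :=
    Fin.strictMono_iff_lt_succ.mpr fun i => hD _ _ (hv i)
  exact Fin.le_of_injective _ hmono.injective

theorem semiTransitive_of_forall_lt {c : V → Fin 3} (hD : ∀ u v, D u v → c u < c v) :
    SemiTransitive D := by
  refine ⟨not_transGen_self_of_forall_lt hD, fun k hk v _ hv _ => ?_⟩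
  exact absurd (lt_of_path_of_forall_lt hD v hv) (by omega)

end MonotoneArcs

theorem coloring_orientation_semiTransitive_general
    {V : Type*} (G : SimpleGraph V) (c : V → Fin 3)
    (hc : ∀ u v : V, G.Adj u v → c u ≠ c v) :
    IsOrientation G (fun u v => G.Adj u v ∧ c u < c v) ∧
      SemiTransitive (fun u v => G.Adj u v ∧ c u < c v) :=
  ⟨isOrientation_of_adj_imp_ne G c hc, semiTransitive_of_forall_lt fun _ _ h => h.2⟩

/-- For a proper 3-coloring `c` of `G`, directing each edge from the endpoint of
smaller color to the endpoint of larger color yields a semi-transitive orientation. -/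
theorem coloring_orientation_semiTransitive
    {V : Type*} [Fintype V] (G : SimpleGraph V) (c : V → Fin 3)
    (hc : ∀ u v : V, G.Adj u v → c u ≠ c v) :
    IsOrientation G (fun u v => G.Adj u v ∧ c u < c v) ∧
      SemiTransitive (fun u v => G.Adj u v ∧ c u < c v) :=
  coloring_orientation_semiTransitive_general G c hc
end

section
/- The graph T2 is not word-representable. -/
/-- Two letters `x` and `y` alternate in the word `w` if the subsequence of `w`
consisting of all occurrences of `x` and `y` has no two consecutive equal letters. -/
def Alternates {V : Type*} [DecidableEq V] (w : List V) (x y : V) : Prop :=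
  (w.filter fun z => decide (z = x ∨ z = y)).Chain' (· ≠ ·)

/-- A word `w` represents the graph `G`: every vertex occurs in `w`, and two distinct
letters alternate in `w` iff they are adjacent in `G`. -/
def Represents {V : Type*} [DecidableEq V] (G : SimpleGraph V) (w : List V) : Prop :=
  (∀ v : V, v ∈ w) ∧ ∀ x y : V, x ≠ y → (Alternates w x y ↔ G.Adj x y)

/-- A graph is word-representable if some word represents it. -/
def WordRepresentable {V : Type*} [DecidableEq V] (G : SimpleGraph V) : Prop :=
  ∃ w : List V, Represents G w
/-- The edges of the 3×3 grid graph on vertices `0,…,8` (labels `1,…,9`, rows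
`(1,2,3), (4,5,6), (7,8,9)` from top to bottom; vertex `i : Fin 9` has label `i+1`). -/
def gridEdges33 : Set (Sym2 (Fin 9)) :=
  {s(0, 1), s(1, 2), s(3, 4), s(4, 5), s(6, 7), s(7, 8),
   s(0, 3), s(1, 4), s(2, 5), s(3, 6), s(4, 7), s(5, 8)}

/-- The triangulation `T1`: the 3×3 grid together with the diagonals
`{2,4}, {2,6}, {5,7}, {6,8}` (in labels `1,…,9`). -/
def T1 : SimpleGraph (Fin 9) :=
  SimpleGraph.fromEdgeSet (gridEdges33 ∪ {s(1, 3), s(1, 5), s(4, 6), s(5, 7)})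

/-- The triangulation `T2`: the 3×3 grid together with the diagonals
`{1,5}, {3,5}, {5,9}, {4,8}` (in labels `1,…,9`). -/
def T2 : SimpleGraph (Fin 9) :=
  SimpleGraph.fromEdgeSet (gridEdges33 ∪ {s(0, 4), s(2, 4), s(4, 8), s(3, 7)})

/-!
Along the prefixes of a word, two letters `x ≠ y` alternate exactly when the count of `x` minus
the count of `y` stays inside some two-element interval `{-s, 1 - s}`. Fix a vertex `a` of a
word-representable graph: each neighbour `v` of `a` gets a `0/1`-valued level along the prefixes,
`#a - #v + s_v`, and two neighbours are adjacent iff their levels are comparable pointwise. So the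
neighbourhood of `a` is a comparability graph.

In `T2` the neighbours of the centre `4` (label `5`) induce a 7-cycle. Orient each of its edges by
the comparability: two consecutive edges pointing the same way would make the vertices two apart
comparable, hence adjacent, so the orientations alternate, which is impossible around an odd cycle.
-/

open Relation

theorem exists_sub_add_mem_Icc_iff_symmGen {ι : Type*} {f g : ι → ℤ}
    (hf : ∀ i, f i ∈ Set.Icc 0 1) (hg : ∀ i, g i ∈ Set.Icc 0 1) :
    (∃ t, ∀ i, g i - f i + t ∈ Set.Icc 0 1) ↔ SymmGen (· ≤ ·) f g := by
  simp only [Set.mem_Icc] at hf hg ⊢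
  constructor
  · rintro ⟨t, ht⟩
    by_contra hfg
    simp only [SymmGen, Pi.le_def, not_or, not_forall, not_le] at hfg
    obtain ⟨⟨i, hi⟩, ⟨j, hj⟩⟩ := hfg
    have := ht i; have := ht j; have := hf i; have := hf j; have := hg i; have := hg j
    omega
  · rintro (hfg | hgf)
    · exact ⟨0, fun i => by have : f i ≤ g i := hfg i; have := hf i; have := hg i; omega⟩
    · exact ⟨1, fun i => by have : g i ≤ f i := hgf i; have := hf i; have := hg i; omega⟩

section WordRepresentation

variable {V : Type*} [DecidableEq V]

def imbalance (w : List V) (x y : V) (n : ℕ) : ℤ :=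
  ((w.take n).count x : ℤ) - (w.take n).count y

@[simp] theorem imbalance_zero (w : List V) (x y : V) : imbalance w x y 0 = 0 := by
  simp [imbalance]

@[simp] theorem imbalance_nil (x y : V) (n : ℕ) : imbalance [] x y n = 0 := by
  simp [imbalance]

theorem imbalance_cons_succ (c : V) (w : List V) (x y : V) (n : ℕ) :
    imbalance (c :: w) x y (n + 1) =
      imbalance w x y n + (if c = x then 1 else 0) - (if c = y then 1 else 0) := by
  simp only [imbalance, List.take_succ_cons, List.count_cons, beq_iff_eq]
  split_ifs <;> push_cast <;> ring

theorem imbalance_sub_imbalance (w : List V) (a x y : V) (n : ℕ) :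
    imbalance w a y n - imbalance w a x n = imbalance w x y n := by
  simp only [imbalance]; ring

/-- The letter in front is a virtual predecessor: offset `0` forces the first of `x`, `y` in `w` to
be `x`, offset `1` forces it to be `y`. -/
theorem forall_imbalance_add_mem_Icc_iff {x y : V} (hxy : x ≠ y) (w : List V) (s : ℤ) :
    (∀ n, imbalance w x y n + s ∈ Set.Icc 0 1) ↔
      (s = 0 ∧ (y :: w.filter (fun z => z = x ∨ z = y)).IsChain (· ≠ ·)) ∨
      (s = 1 ∧ (x :: w.filter (fun z => z = x ∨ z = y)).IsChain (· ≠ ·)) := by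
  induction w generalizing s with
  | nil =>
    simp only [imbalance_nil, zero_add, Set.mem_Icc, forall_const, List.filter_nil,
      List.IsChain.singleton, and_true]
    omega
  | cons c w ih =>
    have hsplit : (∀ n, imbalance (c :: w) x y n + s ∈ Set.Icc 0 1) ↔ s ∈ Set.Icc 0 1 ∧
        ∀ n, imbalance w x y n + (s + (if c = x then 1 else 0) - (if c = y then 1 else 0)) ∈
          Set.Icc 0 1 := by
      refine ⟨fun h => ⟨by simpa using h 0, fun n => ?_⟩, fun ⟨h0, h⟩ n => ?_⟩
      · convert h (n + 1) using 1; rw [imbalance_cons_succ]; ring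
      · cases n with
        | zero => simpa using h0
        | succ n => convert h n using 1; rw [imbalance_cons_succ]; ring
    rw [hsplit, ih]
    grind

theorem alternates_iff_isChain (w : List V) (x y : V) :
    Alternates w x y ↔ (w.filter fun z => z = x ∨ z = y).IsChain (· ≠ ·) :=
  Iff.rfl

theorem alternates_iff_exists_imbalance_add_mem_Icc {x y : V} (hxy : x ≠ y) (w : List V) :
    Alternates w x y ↔ ∃ s : ℤ, ∀ n, imbalance w x y n + s ∈ Set.Icc 0 1 := by
  simp only [alternates_iff_isChain, forall_imbalance_add_mem_Icc_iff hxy, exists_or,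
    exists_eq_left]
  rcases h : w.filter (fun z => z = x ∨ z = y) with _ | ⟨b, l⟩
  · simp
  · have hb : b = x ∨ b = y := by
      have hbw : b ∈ w.filter (fun z => z = x ∨ z = y) := h ▸ List.mem_cons_self
      simpa using (List.mem_filter.1 hbw).2
    rcases hb with rfl | rfl <;> simp [List.isChain_cons_cons, hxy, hxy.symm]

theorem WordRepresentable.exists_adj_iff_symmGen_le {G : SimpleGraph V} (hG : WordRepresentable G)
    (a : V) : ∃ level : V → ℕ → ℤ, ∀ ⦃x y⦄, G.Adj a x → G.Adj a y → x ≠ y →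
      (G.Adj x y ↔ SymmGen (· ≤ ·) (level x) (level y)) := by
  obtain ⟨w, -, hw⟩ := hG
  have hshift : ∀ v, ∃ s : ℤ, G.Adj a v → ∀ n, imbalance w a v n + s ∈ Set.Icc 0 1 := by
    intro v
    by_cases hav : G.Adj a v
    · obtain ⟨s, hs⟩ :=
        (alternates_iff_exists_imbalance_add_mem_Icc hav.ne w).1 ((hw a v hav.ne).2 hav)
      exact ⟨s, fun _ => hs⟩
    · exact ⟨0, fun h => absurd h hav⟩
  choose s hs using hshift
  refine ⟨fun v n => imbalance w a v n + s v, fun x y hx hy hxy => ?_⟩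
  rw [← hw x y hxy, alternates_iff_exists_imbalance_add_mem_Icc hxy,
    ← exists_sub_add_mem_Icc_iff_symmGen (hs x hx) (hs y hy)]
  have hrel : ∀ n t, imbalance w a y n + s y - (imbalance w a x n + s x) + t =
      imbalance w x y n + (t + s y - s x) := by
    intro n t
    rw [← imbalance_sub_imbalance w a x y n]
    ring
  simp only [hrel]
  constructor
  · rintro ⟨t, ht⟩
    exact ⟨t - s y + s x, fun n => by convert ht n using 2; ring⟩
  · rintro ⟨t, ht⟩
    exact ⟨t + s y - s x, ht⟩

end WordRepresentation

section OddCycle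

variable {α : Type*} [Preorder α] {n : ℕ} {c : ZMod n → α}

theorem le_add_three_of_le_add_one (hadj : ∀ i, SymmGen (· ≤ ·) (c i) (c (i + 1)))
    (hnadj : ∀ i, ¬ SymmGen (· ≤ ·) (c i) (c (i + 2))) {i : ZMod n} (h : c i ≤ c (i + 1)) :
    c (i + 2) ≤ c (i + 3) := by
  have e1 : i + 1 + 1 = i + 2 := by ring
  have e2 : i + 2 + 1 = i + 3 := by ring
  have e3 : i + 1 + 2 = i + 3 := by ring
  have h21 : c (i + 2) ≤ c (i + 1) := by
    refine (e1 ▸ hadj (i + 1)).resolve_left fun h12 => hnadj i (.of_le (h.trans h12))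
  exact (e2 ▸ hadj (i + 2)).resolve_right fun h32 =>
    hnadj (i + 1) (by rw [e3]; exact .of_ge (h32.trans h21))

theorem not_le_add_one_of_odd (hn : Odd n) (hadj : ∀ i, SymmGen (· ≤ ·) (c i) (c (i + 1)))
    (hnadj : ∀ i, ¬ SymmGen (· ≤ ·) (c i) (c (i + 2))) (i : ZMod n) : ¬ c i ≤ c (i + 1) := by
  intro h
  have hstep : ∀ k : ℕ, c (i + 2 * k) ≤ c (i + 2 * k + 1) := by
    intro k
    induction k with
    | zero => simpa using h
    | succ k ih =>
      convert le_add_three_of_le_add_one hadj hnadj ih using 2 <;> push_cast <;> ring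
  obtain ⟨m, rfl⟩ := hn
  have hwrap : i + 2 * ((m + 1 : ℕ) : ZMod (2 * m + 1)) = i + 1 := by
    have : ((2 * m + 1 : ℕ) : ZMod (2 * m + 1)) = 0 := ZMod.natCast_self _
    push_cast at this ⊢
    linear_combination this
  have h12 := hstep (m + 1)
  rw [hwrap, add_assoc, one_add_one_eq_two] at h12
  exact hnadj i (.of_le (h.trans h12))

theorem exists_symmGen_le_add_two_of_odd (hn : Odd n)
    (hadj : ∀ i, SymmGen (· ≤ ·) (c i) (c (i + 1))) : ∃ i, SymmGen (· ≤ ·) (c i) (c (i + 2)) := by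
  by_contra! hnadj
  rcases hadj 0 with h | h
  · exact not_le_add_one_of_odd hn hadj hnadj 0 h
  · exact not_le_add_one_of_odd (c := OrderDual.toDual ∘ c) hn (fun i => (hadj i).symm)
      (fun i h' => hnadj i h'.symm) 0 h

end OddCycle

namespace T2

def rim : ZMod 7 → Fin 9 := ![0, 1, 2, 5, 8, 7, 3]

theorem adj_iff {x y : Fin 9} : T2.Adj x y ↔ x ≠ y ∧ s(x, y) ∈
    ({s(0, 4), s(2, 4), s(4, 8), s(3, 7), s(0, 1), s(1, 2), s(3, 4), s(4, 5),
      s(6, 7), s(7, 8), s(0, 3), s(1, 4), s(2, 5), s(3, 6), s(4, 7), s(5, 8)} :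
      Finset (Sym2 (Fin 9))) := by
  simp [T2, gridEdges33, and_comm]

theorem adj_rim : ∀ i, T2.Adj 4 (rim i) := by
  simp only [adj_iff]; decide

theorem rim_adj_rim_add_one : ∀ i, T2.Adj (rim i) (rim (i + 1)) := by
  simp only [adj_iff]; decide

theorem rim_not_adj_rim_add_two : ∀ i, ¬ T2.Adj (rim i) (rim (i + 2)) := by
  simp only [adj_iff]; decide

theorem rim_ne_rim_add_two : ∀ i, rim i ≠ rim (i + 2) := by decide

end T2

/-- The graph `T2` is not word-representable. -/
theorem T2_not_wordRepresentable : ¬ WordRepresentable T2 := by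
  intro hT2
  obtain ⟨level, hlevel⟩ := hT2.exists_adj_iff_symmGen_le 4
  obtain ⟨i, hi⟩ := exists_symmGen_le_add_two_of_odd (c := level ∘ T2.rim) ⟨3, rfl⟩ fun i =>
    (hlevel (T2.adj_rim i) (T2.adj_rim _) (T2.rim_adj_rim_add_one i).ne).1
      (T2.rim_adj_rim_add_one i)
  exact T2.rim_not_adj_rim_add_two i
    ((hlevel (T2.adj_rim i) (T2.adj_rim _) (T2.rim_ne_rim_add_two i)).2 hi)
end

section
/- The graph T1 is not 3-colorable. -/
theorem eq_of_pairwise_ne_of_card_le_three {α : Type*} [Fintype α] (hα : Fintype.card α ≤ 3)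
    {a b c d : α} (hab : a ≠ b) (hac : a ≠ c) (hbc : b ≠ c) (had : a ≠ d) (hbd : b ≠ d) :
    c = d := by
  classical
  by_contra hcd
  have : ({a, b, c, d} : Finset α).card = 4 := by
    simp [*]
  have := Finset.card_le_univ ({a, b, c, d} : Finset α)
  omega

namespace SimpleGraph.Coloring

variable {V α : Type*} {G : SimpleGraph V}

theorem eq_of_triangles_on_edge [Fintype α] (hα : Fintype.card α ≤ 3) (C : G.Coloring α)
    {a b c d : V}
    (hab : G.Adj a b) (hac : G.Adj a c) (hbc : G.Adj b c) (had : G.Adj a d) (hbd : G.Adj b d) :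
    C c = C d :=
  eq_of_pairwise_ne_of_card_le_three hα (C.valid hab) (C.valid hac) (C.valid hbc) (C.valid had)
    (C.valid hbd)

end SimpleGraph.Coloring

/-- The graph `T1` is not 3-colorable. -/
theorem T1_not_colorable_three : ¬ T1.Colorable 3 := by
  rintro ⟨C⟩
  have hcard : Fintype.card (Fin 3) ≤ 3 := (Fintype.card_fin 3).le
  -- The link of the vertex labelled 5 is the 5-cycle 2-4-7-8-6; walking around it through the
  -- triangles at 5 forces equal colors on the adjacent vertices 2 and 6. Hypotheses are named
  -- by labels, which exceed the `Fin 9` indices by one.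
  obtain ⟨h45, h42, h52, h47, h57, h58, h87, h56, h86, h26⟩ :
      T1.Adj 3 4 ∧ T1.Adj 3 1 ∧ T1.Adj 4 1 ∧ T1.Adj 3 6 ∧ T1.Adj 4 6 ∧
      T1.Adj 4 7 ∧ T1.Adj 7 6 ∧ T1.Adj 4 5 ∧ T1.Adj 7 5 ∧ T1.Adj 1 5 := by
    simp [T1, gridEdges33]
  have h27 : C 1 = C 6 := C.eq_of_triangles_on_edge hcard h45 h42 h52 h47 h57
  have h76 : C 6 = C 5 := C.eq_of_triangles_on_edge hcard h58 h57 h87 h56 h86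
  exact C.valid h26 (h27.trans h76)
end

section
/- For every choice function d : {0,1}×{0,1} → {0,1}, if the triangulation T_d of the 2×2-cell grid graph (on the 3×3 vertex set {0,1,2}×{0,1,2}) is not 3-colorable, then T_d is isomorphic as a simple graph to T1 or to T2. -/
/-- The triangulation of the `m × n` grid graph (vertex set `{0,…,m} × {0,…,n}`)
determined by the choice `d` of a diagonal for each cell: all grid edges, plus for
each cell `(i,j)` the main diagonal `{(i,j),(i+1,j+1)}` if `d i j = 0` and the
anti-diagonal `{(i+1,j),(i,j+1)}` if `d i j = 1`. -/
def GridTri (m n : ℕ) (d : ℕ → ℕ → Fin 2) :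
    SimpleGraph (Fin (m + 1) × Fin (n + 1)) :=
  SimpleGraph.fromRel fun p q =>
    (q.1.val = p.1.val + 1 ∧ q.2.val = p.2.val) ∨
    (q.1.val = p.1.val ∧ q.2.val = p.2.val + 1) ∨
    (d p.1.val p.2.val = 0 ∧ q.1.val = p.1.val + 1 ∧ q.2.val = p.2.val + 1) ∨
    (d q.1.val p.2.val = 1 ∧ p.1.val = q.1.val + 1 ∧ q.2.val = p.2.val + 1)


instance : DecidableRel T1.Adj := by
  unfold T1 gridEdges33; infer_instance

instance : DecidableRel T2.Adj := by
  unfold T2 gridEdges33; infer_instance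

instance (m n : ℕ) (d : ℕ → ℕ → Fin 2) : DecidableRel (GridTri m n d).Adj := fun p q =>
  decidable_of_iff' _ (SimpleGraph.fromRel_adj _ p q)

namespace GridTri

theorem eq_of_eqOn_cells {m n : ℕ} {d d' : ℕ → ℕ → Fin 2}
    (h : ∀ i < m, ∀ j < n, d i j = d' i j) : GridTri m n d = GridTri m n d' := by
  unfold GridTri
  congr 1
  ext p q
  have := p.2.is_lt; have := q.1.is_lt
  refine or_congr_right (or_congr_right (or_congr ?_ ?_)) <;>
    refine and_congr_left fun hc => ?_ <;> rw [h _ (by omega) _ (by omega)]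

def twoByTwoChoice (a b c e : Fin 2) : ℕ → ℕ → Fin 2 :=
  fun i j => ![![a, b], ![c, e]] (Fin.ofNat 2 i) (Fin.ofNat 2 j)

theorem two_two_eq_twoByTwoChoice (d : ℕ → ℕ → Fin 2) :
    GridTri 2 2 d = GridTri 2 2 (twoByTwoChoice (d 0 0) (d 0 1) (d 1 0) (d 1 1)) :=
  eq_of_eqOn_cells fun i hi j hj => by interval_cases i <;> interval_cases j <;> rfl

theorem degree_eq_five_or_seven_of_odd {a b c e : Fin 2}
    (h : Odd ((GridTri 2 2 (twoByTwoChoice a b c e)).degree (1, 1))) :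
    (GridTri 2 2 (twoByTwoChoice a b c e)).degree (1, 1) = 5 ∨
      (GridTri 2 2 (twoByTwoChoice a b c e)).degree (1, 1) = 7 := by
  revert a b c e; decide

theorem colorable_three_of_even_degree {a b c e : Fin 2}
    (h : Even ((GridTri 2 2 (twoByTwoChoice a b c e)).degree (1, 1))) :
    (GridTri 2 2 (twoByTwoChoice a b c e)).Colorable 3 := by
  fin_cases a <;> fin_cases b <;> fin_cases c <;> fin_cases e <;>
    try exact absurd h (by decide)
  · exact ⟨.mk (fun p => ![![0, 1, 2], ![1, 2, 0], ![2, 0, 1]] p.1 p.2) (by decide)⟩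
  · exact ⟨.mk (fun p => ![![0, 1, 2], ![1, 2, 0], ![0, 1, 2]] p.1 p.2) (by decide)⟩
  · exact ⟨.mk (fun p => ![![0, 1, 0], ![1, 2, 1], ![2, 0, 2]] p.1 p.2) (by decide)⟩
  · exact ⟨.mk (fun p => ![![0, 1, 0], ![1, 2, 1], ![0, 1, 0]] p.1 p.2) (by decide)⟩
  · exact ⟨.mk (fun p => ![![0, 1, 0], ![2, 0, 2], ![0, 1, 0]] p.1 p.2) (by decide)⟩
  · exact ⟨.mk (fun p => ![![0, 1, 0], ![2, 0, 2], ![1, 2, 1]] p.1 p.2) (by decide)⟩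
  · exact ⟨.mk (fun p => ![![0, 1, 2], ![2, 0, 1], ![0, 1, 2]] p.1 p.2) (by decide)⟩
  · exact ⟨.mk (fun p => ![![0, 1, 2], ![2, 0, 1], ![1, 2, 0]] p.1 p.2) (by decide)⟩

def transpose : Fin 3 × Fin 3 ≃ Fin 3 × Fin 3 := Equiv.prodComm _ _
def reflect : Fin 3 × Fin 3 ≃ Fin 3 × Fin 3 := Equiv.prodCongr (Equiv.refl _) Fin.revPerm
def rotate : Fin 3 × Fin 3 ≃ Fin 3 × Fin 3 :=
  transpose.trans (Equiv.prodCongr Fin.revPerm (Equiv.refl _))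

/- `finProdFinEquiv` sends `(i, j)` to `3 i + j`, the vertex in row `i` and column `j` of `T1` and
`T2`. -/

theorem nonempty_iso_T1_of_degree_eq_five {a b c e : Fin 2}
    (h : (GridTri 2 2 (twoByTwoChoice a b c e)).degree (1, 1) = 5) :
    Nonempty (GridTri 2 2 (twoByTwoChoice a b c e) ≃g T1) := by
  fin_cases a <;> fin_cases b <;> fin_cases c <;> fin_cases e <;>
    try exact absurd h (by decide)
  · exact ⟨⟨rotate.trans finProdFinEquiv, by decide⟩⟩
  · exact ⟨⟨reflect.trans finProdFinEquiv, by decide⟩⟩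
  · exact ⟨⟨finProdFinEquiv, by decide⟩⟩
  · exact ⟨⟨transpose.trans finProdFinEquiv, by decide⟩⟩

theorem nonempty_iso_T2_of_degree_eq_seven {a b c e : Fin 2}
    (h : (GridTri 2 2 (twoByTwoChoice a b c e)).degree (1, 1) = 7) :
    Nonempty (GridTri 2 2 (twoByTwoChoice a b c e) ≃g T2) := by
  fin_cases a <;> fin_cases b <;> fin_cases c <;> fin_cases e <;>
    try exact absurd h (by decide)
  · exact ⟨⟨transpose.trans finProdFinEquiv, by decide⟩⟩
  · exact ⟨⟨finProdFinEquiv, by decide⟩⟩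
  · exact ⟨⟨reflect.trans finProdFinEquiv, by decide⟩⟩
  · exact ⟨⟨rotate.trans finProdFinEquiv, by decide⟩⟩

end GridTri

/-- Every non-3-colorable triangulation of the 2×2-cell grid (on the 3×3 vertex set)
is isomorphic to `T1` or to `T2`. -/
theorem non_three_colorable_triangulation_of_two_by_two_grid
    (d : ℕ → ℕ → Fin 2) (h : ¬ (GridTri 2 2 d).Colorable 3) :
    Nonempty (GridTri 2 2 d ≃g T1) ∨ Nonempty (GridTri 2 2 d ≃g T2) := by
  rw [GridTri.two_two_eq_twoByTwoChoice] at h ⊢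
  have hodd :
      Odd ((GridTri 2 2 (GridTri.twoByTwoChoice (d 0 0) (d 0 1) (d 1 0) (d 1 1))).degree (1, 1)) :=
    Nat.not_even_iff_odd.mp fun heven => h (GridTri.colorable_three_of_even_degree heven)
  exact (GridTri.degree_eq_five_or_seven_of_odd hodd).imp
    GridTri.nonempty_iso_T1_of_degree_eq_five GridTri.nonempty_iso_T2_of_degree_eq_seven
end
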